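/- arXiv:2003.02254 — 2 statements merged into one kernel-verified Lean document; each statement's English description precedes it below -/
import Mathlib

section
/- Let C be a pretriangulated category and let F : C ≌ D be an equivalence of categories where D is a skeletal category. Then D admits the structure of a pretriangulated category (preadditive structure, zero object, ℤ-shift with additive shift functors, distinguished triangles) together with a natural isomorphism Θ : shift_C 1 ⋙ F ≅ F ⋙ shift_D 1 making the underlying functor of F a triangle equivalence, and in addition the suspension functor of D is an automorphism of the category D: the shift-by-1 endofunctor of D has a bijective object map and admits a functor G : D ⥤ D whose composites with it in both orders equal the identity functor of D. -/
open CategoryTheory CategoryTheory.Limits CategoryTheory.Pretriangulated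

/-!
An equivalence `e : C ≌ D` is a localization functor for the class of isomorphisms of `C`, and
this class is compatible with the shift and the triangulation, so Verdier's localization of
pretriangulated categories equips `D` with a pretriangulated structure for which `e.functor` is
a triangulated functor. An equivalence between skeletal categories is bijective on objects, hence
an isomorphism of categories; applied to the suspension of `D` this gives its strict inverse.
-/

/-- The data of a pretriangulated structure on a category: a preadditive structure, a zero
object, a shift by `ℤ` with additive shift functors, and a class of distinguished triangles
satisfying the pretriangulated axioms. -/
structure PretriangulatedStruct (D : Type*) [Category D] where
  pre : Preadditive D
  zero : HasZeroObject D
  shift : HasShift D ℤ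
  shiftAdditive : ∀ n : ℤ, @Functor.Additive D D _ _ pre pre (@shiftFunctor D ℤ _ _ shift n)
  pretri : @Pretriangulated D _ zero shift pre shiftAdditive

namespace CategoryTheory

namespace MorphismProperty

variable (C : Type*) [Category C]

instance : (isomorphisms C).HasLeftCalculusOfFractions where
  exists_leftFraction _ Y φ := by
    have : IsIso φ.s := φ.hs
    exact ⟨LeftFraction.mk (inv φ.s ≫ φ.f) (𝟙 Y) (isomorphisms.infer_property _), by simp⟩
  ext _ _ Y _ _ s hs h := by
    have : IsIso s := hs
    exact ⟨Y, 𝟙 Y, isomorphisms.infer_property _, by simpa using (cancel_epi s).1 h⟩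

instance (A : Type*) [AddGroup A] [HasShift C A] : (isomorphisms C).IsCompatibleWithShift A where
  condition a := by
    ext X Y f
    exact ⟨fun (_ : IsIso (f⟦a⟧')) => isIso_of_fully_faithful (shiftFunctor C a) f,
      fun (_ : IsIso f) => (inferInstance : IsIso (f⟦a⟧'))⟩

instance [HasZeroObject C] [HasShift C ℤ] [Preadditive C] [∀ n : ℤ, (shiftFunctor C n).Additive]
    [Pretriangulated C] : (isomorphisms C).IsCompatibleWithTriangulation where
  compatible_with_triangulation T₁ T₂ hT₁ hT₂ a b ha hb comm := by
    obtain ⟨c, hc₂, hc₃⟩ := complete_distinguished_triangle_morphism T₁ T₂ hT₁ hT₂ a b comm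
    exact ⟨c, isIso₃_of_isIso₁₂ (Triangle.homMk T₁ T₂ a b c comm hc₂ hc₃) hT₁ hT₂ ha hb,
      hc₂, hc₃⟩

end MorphismProperty

theorem exists_pretriangulatedStruct_of_isLocalization {C D : Type*} [Category C] [Category D]
    [HasZeroObject C] [HasShift C ℤ] [Preadditive C] [∀ n : ℤ, (shiftFunctor C n).Additive]
    [Pretriangulated C] (L : C ⥤ D) (W : MorphismProperty C) [L.IsLocalization W]
    [W.HasLeftCalculusOfFractions] [W.IsCompatibleWithTriangulation] :
    ∃ (S : PretriangulatedStruct D)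
      (Θ : shiftFunctor C (1 : ℤ) ⋙ L ≅ L ⋙ @shiftFunctor D ℤ _ _ S.shift (1 : ℤ)),
      ∀ T ∈ distTriang C,
        @Triangle.mk D _ S.shift _ _ _ (L.map T.mor₁) (L.map T.mor₂)
            (L.map T.mor₃ ≫ Θ.hom.app T.obj₁) ∈ S.pretri.distinguishedTriangles := by
  let := Localization.preadditive L W
  have := Localization.functor_additive L W
  have : HasZeroObject D := L.hasZeroObject_of_additive
  let := HasShift.localized L W ℤ
  let := Functor.CommShift.localized L W ℤ
  have (n : ℤ) : (shiftFunctor D n).Additive := by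
    rw [Localization.functor_additive_iff L W]
    exact Functor.additive_of_iso (L.commShiftIso n)
  let := Triangulated.Localization.pretriangulated L W
  exact ⟨⟨_, _, _, inferInstance, inferInstance⟩, L.commShiftIso 1, L.map_distinguished⟩

theorem Functor.isIso_of_skeletal {C D : Type*} [Category C] [Category D] (hC : Skeletal C)
    (hD : Skeletal D) (F : C ⥤ D) [F.IsEquivalence] : F.IsIso where
  bijective_obj :=
    ⟨fun _ _ h => hC ⟨F.preimageIso (eqToIso h)⟩,
      fun Y => ⟨F.objPreimage Y, hD ⟨F.objObjPreimageIso Y⟩⟩⟩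

end CategoryTheory

/-- Transport of pretriangulated structure to a skeletal category: if `C` is pretriangulated
and `e : C ≌ D` is an equivalence with `D` skeletal, then `D` admits a pretriangulated
structure, with a natural isomorphism `Θ : shift_C 1 ⋙ F ≅ F ⋙ shift_D 1` making
`F = e.functor` a triangle equivalence, and moreover the suspension functor `shift_D 1` is an
automorphism of the category `D`: its object map is bijective and it admits a strictly
inverse functor. -/
theorem transport_pretriangulated_structure_to_skeletal
    {C : Type*} [Category C] [HasZeroObject C] [HasShift C ℤ] [Preadditive C]
    [∀ n : ℤ, (shiftFunctor C n).Additive] [Pretriangulated C]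
    {D : Type*} [Category D] (hD : Skeletal D) (e : C ≌ D) :
    ∃ (S : PretriangulatedStruct D)
      (Θ : shiftFunctor C (1 : ℤ) ⋙ e.functor ≅
        e.functor ⋙ @shiftFunctor D ℤ _ _ S.shift (1 : ℤ)),
      (∀ T ∈ (distTriang C),
        @Triangle.mk D _ S.shift _ _ _ (e.functor.map T.mor₁) (e.functor.map T.mor₂)
            (e.functor.map T.mor₃ ≫ Θ.hom.app T.obj₁) ∈
          S.pretri.distinguishedTriangles) ∧
      Function.Bijective (@shiftFunctor D ℤ _ _ S.shift (1 : ℤ)).obj ∧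
      ∃ G : D ⥤ D, (@shiftFunctor D ℤ _ _ S.shift (1 : ℤ)) ⋙ G = 𝟭 D ∧
        G ⋙ (@shiftFunctor D ℤ _ _ S.shift (1 : ℤ)) = 𝟭 D := by
  have := Functor.IsLocalization.of_isEquivalence e.functor _ le_rfl
  obtain ⟨S, Θ, hΘ⟩ :=
    exists_pretriangulatedStruct_of_isLocalization e.functor (MorphismProperty.isomorphisms C)
  let := S.shift
  have := Functor.isIso_of_skeletal hD hD (shiftFunctor D (1 : ℤ))
  let σ := (shiftFunctor D (1 : ℤ)).asIsomorphism
  exact ⟨S, Θ, hΘ, (shiftFunctor D (1 : ℤ)).bijective_obj, σ.inverse, σ.unit_eq.symm, σ.counit_eq⟩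
end

section
/- Let C be a pretriangulated category and let S = Skeleton C be its skeleton, with the canonical equivalence ε : S ≌ C. Then S admits the structure of a pretriangulated category together with a natural isomorphism shift_S 1 ⋙ ε.functor ≅ ε.functor ⋙ shift_C 1 making ε.functor a triangle equivalence; moreover the suspension functor shift_S 1 of S is an automorphism of the category S (its object map is bijective and it admits a strictly inverse functor). If C is triangulated (satisfies the octahedral axiom), then so is S. -/
/-!
An equivalence `e : D ≌ C` makes `e.inverse` a localization of `C` at its isomorphisms. These
admit a calculus of left fractions and are compatible with the shift and the triangulation, so
the localization theory of triangulated categories equips `D` with a pretriangulated structure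
(triangulated when `C` is) for which `e.functor`, the functor induced by `𝟭 C`, is triangulated.
For `D = Skeleton C` the shift is an autoequivalence of a skeletal category, hence bijective on
objects, and a fully faithful functor bijective on objects has a strict inverse.
-/

open CategoryTheory CategoryTheory.Limits CategoryTheory.Pretriangulated

namespace CategoryTheory

namespace MorphismProperty

variable {C : Type*} [Category C]

instance inst_s10 : (isomorphisms C).HasLeftCalculusOfFractions where
  exists_leftFraction X Y φ := by
    have : IsIso φ.s := φ.hs
    exact ⟨LeftFraction.mk (inv φ.s ≫ φ.f) (𝟙 Y) (isomorphisms.infer_property _), by simp⟩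
  ext X' X Y f₁ f₂ s hs h := by
    have : IsIso s := hs
    exact ⟨Y, 𝟙 Y, isomorphisms.infer_property _, by simpa using (cancel_epi s).1 h⟩

instance inst_s10_2 (A : Type*) [AddGroup A] [HasShift C A] : (isomorphisms C).IsCompatibleWithShift A where
  condition a := by
    ext X Y f
    exact ⟨fun (_ : IsIso (f⟦a⟧')) => isIso_of_reflects_iso f (shiftFunctor C a),
      fun (_ : IsIso f) => (inferInstance : IsIso (f⟦a⟧'))⟩

instance inst_s10_3 [HasZeroObject C] [HasShift C ℤ] [Preadditive C] [∀ n : ℤ, (shiftFunctor C n).Additive]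
    [Pretriangulated C] : (isomorphisms C).IsCompatibleWithTriangulation where
  compatible_with_triangulation T₁ T₂ hT₁ hT₂ a b ha hb comm := by
    have : IsIso a := ha
    have : IsIso b := hb
    let i := isoTriangleOfIso₁₂ T₁ T₂ hT₁ hT₂ (asIso a) (asIso b) comm
    exact ⟨i.hom.hom₃, isomorphisms.infer_property _, i.hom.comm₂, i.hom.comm₃⟩

end MorphismProperty

namespace Functor

variable {C D : Type*} [Category C] [Category D]

lemma bijective_obj_of_skeletal (hC : Skeletal C) (hD : Skeletal D) (F : C ⥤ D)
    [F.IsEquivalence] : Function.Bijective F.obj :=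
  ⟨fun _ _ h => hC ⟨F.preimageIso (eqToIso h)⟩,
    fun Y => ⟨F.objPreimage Y, hD ⟨F.objObjPreimageIso Y⟩⟩⟩

lemma exists_inverse_of_bijective_obj (F : C ⥤ D) [F.Full] [F.Faithful]
    (hF : Function.Bijective F.obj) : ∃ G : D ⥤ C, F ⋙ G = 𝟭 C ∧ G ⋙ F = 𝟭 D := by
  let E := Equiv.ofBijective F.obj hF
  have hFE (Y : D) : F.obj (E.symm Y) = Y := E.apply_symm_apply Y
  have hEF (X : C) : E.symm (F.obj X) = X := E.symm_apply_apply X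
  let G : D ⥤ C :=
    { obj := E.symm
      map := fun {Y Y'} g => F.preimage (eqToHom (hFE Y) ≫ g ≫ eqToHom (hFE Y').symm)
      map_id := fun Y => F.map_injective (by simp)
      map_comp := fun f g => F.map_injective (by simp) }
  exact ⟨G, Functor.ext hEF fun X Y f => F.map_injective (by simp [G, eqToHom_map]),
    Functor.ext hFE fun X Y f => by simp [G]⟩

end Functor

namespace Equivalence

variable {C D : Type*} [Category C] [Category D] [HasZeroObject C] [HasShift C ℤ] [Preadditive C]
  [∀ n : ℤ, (shiftFunctor C n).Additive] [Pretriangulated C]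

theorem exists_pretriangulatedStruct (e : D ≌ C) :
    ∃ S : PretriangulatedStruct D,
      letI := S.pre; letI := S.zero; letI := S.shift; letI := S.shiftAdditive; letI := S.pretri
      ∃ Θ : shiftFunctor D (1 : ℤ) ⋙ e.functor ≅ e.functor ⋙ shiftFunctor C (1 : ℤ),
        (∀ T ∈ distTriang D, Triangle.mk (e.functor.map T.mor₁) (e.functor.map T.mor₂)
            (e.functor.map T.mor₃ ≫ Θ.hom.app T.obj₁) ∈ distTriang C) ∧
        (CategoryTheory.IsTriangulated C → CategoryTheory.IsTriangulated D) := by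
  let L := e.inverse
  let W := MorphismProperty.isomorphisms C
  have : L.IsLocalization W := Functor.IsLocalization.of_isEquivalence L W le_rfl
  let pre : Preadditive D := Localization.preadditive L W
  have : L.Additive := Localization.functor_additive L W
  have zero : HasZeroObject D := (L.map_isZero (isZero_zero C)).hasZeroObject
  let shift : HasShift D ℤ := HasShift.localized L W ℤ
  have : L.CommShift ℤ := Functor.CommShift.localized L W ℤ
  have shiftAdditive (n : ℤ) : (shiftFunctor D n).Additive := by
    rw [Localization.functor_additive_iff L W]
    exact Functor.additive_of_iso (L.commShiftIso n)
  let pretri : Pretriangulated D := Triangulated.Localization.pretriangulated L W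
  have : L.IsTriangulated := Triangulated.Localization.isTriangulated_functor L W
  have : Localization.Lifting L W (𝟭 C) e.functor := ⟨e.counitIso⟩
  let : e.functor.CommShift ℤ := Functor.commShiftOfLocalization L W ℤ (𝟭 C) e.functor
  have : L.mapArrow.EssSurj := Localization.essSurj_mapArrow L W
  have : e.functor.IsTriangulated :=
    Functor.isTriangulated_of_precomp_iso (Localization.Lifting.iso L W (𝟭 C) e.functor)
  refine ⟨⟨pre, zero, shift, shiftAdditive, pretri⟩, e.functor.commShiftIso 1,
    e.functor.map_distinguished, fun _ => ?_⟩
  exact Triangulated.Localization.isTriangulated L W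

end Equivalence

end CategoryTheory

/-- The skeleton of a pretriangulated category `C` admits a pretriangulated structure together
with a natural isomorphism `shift_S 1 ⋙ ε.functor ≅ ε.functor ⋙ shift_C 1` making the
canonical equivalence functor `ε.functor : Skeleton C ⥤ C` a triangle equivalence; moreover
the suspension functor of the skeleton is an automorphism of the category (bijective on
objects, with a strictly inverse functor), and if `C` is triangulated then so is its
skeleton. -/
theorem skeleton_pretriangulated
    {C : Type*} [Category C] [HasZeroObject C] [HasShift C ℤ] [Preadditive C]
    [∀ n : ℤ, (shiftFunctor C n).Additive] [Pretriangulated C] :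
    ∃ (S : PretriangulatedStruct (Skeleton C))
      (Θ : @shiftFunctor (Skeleton C) ℤ _ _ S.shift (1 : ℤ) ⋙ (skeletonEquivalence C).functor ≅
        (skeletonEquivalence C).functor ⋙ shiftFunctor C (1 : ℤ)),
      (∀ T ∈ S.pretri.distinguishedTriangles,
        Triangle.mk ((skeletonEquivalence C).functor.map
            (@Triangle.mor₁ (Skeleton C) _ S.shift T))
          ((skeletonEquivalence C).functor.map (@Triangle.mor₂ (Skeleton C) _ S.shift T))
          ((skeletonEquivalence C).functor.map (@Triangle.mor₃ (Skeleton C) _ S.shift T) ≫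
            Θ.hom.app (@Triangle.obj₁ (Skeleton C) _ S.shift T)) ∈ distTriang C) ∧
      Function.Bijective (@shiftFunctor (Skeleton C) ℤ _ _ S.shift (1 : ℤ)).obj ∧
      (∃ G : Skeleton C ⥤ Skeleton C,
        (@shiftFunctor (Skeleton C) ℤ _ _ S.shift (1 : ℤ)) ⋙ G = 𝟭 (Skeleton C) ∧
        G ⋙ (@shiftFunctor (Skeleton C) ℤ _ _ S.shift (1 : ℤ)) = 𝟭 (Skeleton C)) ∧
      (IsTriangulated C →
        @IsTriangulated (Skeleton C) _ S.pre S.zero S.shift S.shiftAdditive S.pretri) := by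
  obtain ⟨S, Θ, hΘ, hTriangulated⟩ := (skeletonEquivalence C).exists_pretriangulatedStruct
  let := S.shift
  have hBijective := Functor.bijective_obj_of_skeletal (skeleton_skeletal C) (skeleton_skeletal C)
    (shiftFunctor (Skeleton C) (1 : ℤ))
  exact ⟨S, Θ, hΘ, hBijective, Functor.exists_inverse_of_bijective_obj _ hBijective, hTriangulated⟩
end
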